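/- Let S' = K[u_1,…,u_m] and S = K[x_0,…,x_n] ⊗_K S', and let T' = K[U_1,…,U_m] and T = K[X_0,…,X_n] ⊗_K T' be the corresponding rings of differential operators, acting by X_i = ∂/∂x_i and U_j = ∂/∂u_j. Let g_0,…,g_n be homogeneous elements of S' of degree d, let I be the T'-submodule of S' generated by all partial derivatives {∂(g_i) : ∂ ∈ T', 0 ≤ i ≤ n}, and let A' = T'/Ann(I), where Ann(I) = {∂ ∈ T' : ∂(h) = 0 for all h ∈ I}; I is naturally an A'-module. Set f = x_0g_0 + ⋯ + x_ng_n, a bihomogeneous polynomial of bidegree (1,d), and A = T/Ann(f). Then A is isomorphic as a K-algebra to the Nagata idealization (trivial square-zero extension) A' ⋉ I. -/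

import Mathlib

/-!
Sending `Xᵣ ↦ (0, gᵣ)` and `Uⱼ ↦ (Uⱼ, 0)` defines a `K`-algebra map `Φ : T → A' ⋉ I`, which is
surjective because `I` is spanned by the `δ(gᵣ) = Φ(Xᵣ δ)`. In the other direction,
`Ψ (a, h) = a f + h` is injective (apply `∂/∂xᵣ` to recover `a gᵣ`, then `h`) and intertwines
the two actions, `Ψ (Φ δ * z) = δ (Ψ z)`, as one checks on the generators `Xᵢ`, which act by
`∂/∂xᵢ`. Since `Ψ 1 = f`, this gives `δ f = Ψ (Φ δ)`, so `Ann(f) = ker Φ`.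
-/

open MvPolynomial

namespace CW

variable {σ K : Type*} [CommSemiring K]

/-- A generic "monomial contraction-type" action of the polynomial ring on itself,
determined by a structure coefficient `ν c a` (the coefficient produced when the
operator monomial with exponent `a` acts on the monomial with exponent `c`). -/
noncomputable def genAct (ν : (σ →₀ ℕ) → (σ →₀ ℕ) → K) (α f : MvPolynomial σ K) :
    MvPolynomial σ K :=
  Finsupp.sum (AddMonoidAlgebra.coeff α) fun a ca =>
    Finsupp.sum (AddMonoidAlgebra.coeff f) fun c cf => monomial (c - a) (ν c a * (ca * cf))

theorem genAct_zero_left (ν : (σ →₀ ℕ) → (σ →₀ ℕ) → K) (f : MvPolynomial σ K) :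
    genAct ν 0 f = 0 :=
  Finsupp.sum_zero_index

theorem genAct_zero_right (ν : (σ →₀ ℕ) → (σ →₀ ℕ) → K) (α : MvPolynomial σ K) :
    genAct ν α 0 = 0 := by
  unfold genAct
  simp only [AddMonoidAlgebra.coeff_zero, Finsupp.sum_zero_index, Finsupp.sum_fun_zero]

theorem genAct_add_left (ν : (σ →₀ ℕ) → (σ →₀ ℕ) → K) (α β f : MvPolynomial σ K) :
    genAct ν (α + β) f = genAct ν α f + genAct ν β f := by
  unfold genAct
  apply Finsupp.sum_add_index'
  · intro a
    simp only [mul_zero, zero_mul, map_zero, Finsupp.sum_fun_zero]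
  · intro a b₁ b₂
    rw [← Finsupp.sum_add]
    apply Finsupp.sum_congr
    intro c _
    rw [add_mul, mul_add, map_add]

theorem genAct_add_right (ν : (σ →₀ ℕ) → (σ →₀ ℕ) → K) (α f g : MvPolynomial σ K) :
    genAct ν α (f + g) = genAct ν α f + genAct ν α g := by
  unfold genAct
  rw [← Finsupp.sum_add]
  apply Finsupp.sum_congr
  intro a _
  apply Finsupp.sum_add_index'
  · intro c
    simp only [mul_zero, map_zero]
  · intro c c₁ c₂
    rw [mul_add, mul_add, map_add]

theorem genAct_monomial (ν : (σ →₀ ℕ) → (σ →₀ ℕ) → K) (a c : σ →₀ ℕ) (r s : K) :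
    genAct ν (monomial a r) (monomial c s) = monomial (c - a) (ν c a * (r * s)) := by
  unfold genAct
  rw [← single_eq_monomial a r, ← single_eq_monomial c s, AddMonoidAlgebra.coeff_single,
    AddMonoidAlgebra.coeff_single]
  rw [Finsupp.sum_single_index, Finsupp.sum_single_index]
  · simp only [mul_zero, map_zero]
  · simp only [mul_zero, zero_mul, map_zero, Finsupp.sum_fun_zero]

theorem genAct_mul {ν : (σ →₀ ℕ) → (σ →₀ ℕ) → K}
    (hν : ∀ c a b, ν c (a + b) = ν c b * ν (c - b) a) (α β f : MvPolynomial σ K) :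
    genAct ν (α * β) f = genAct ν α (genAct ν β f) := by
  induction α using MvPolynomial.induction_on' with
  | add p q hp hq => rw [add_mul, genAct_add_left, hp, hq, genAct_add_left]
  | monomial a r =>
    induction β using MvPolynomial.induction_on' with
    | add p q hp hq =>
      rw [mul_add, genAct_add_left, hp, hq, ← genAct_add_right, genAct_add_left]
    | monomial b s =>
      induction f using MvPolynomial.induction_on' with
      | add p q hp hq =>
        rw [genAct_add_right, hp, hq, ← genAct_add_right, ← genAct_add_right]
      | monomial c t =>
        rw [monomial_mul, genAct_monomial, genAct_monomial, genAct_monomial,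
          show c - (a + b) = c - b - a from by rw [tsub_tsub, add_comm], hν]
        congr 1
        ring

/-- The annihilator ideal of `f` under the action `genAct ν`. -/
noncomputable def annG (ν : (σ →₀ ℕ) → (σ →₀ ℕ) → K)
    (hν : ∀ c a b, ν c (a + b) = ν c b * ν (c - b) a) (f : MvPolynomial σ K) :
    Ideal (MvPolynomial σ K) where
  carrier := {α | genAct ν α f = 0}
  zero_mem' := genAct_zero_left ν f
  add_mem' := by
    intro a b ha hb
    show genAct ν (a + b) f = 0
    rw [genAct_add_left, ha, hb, add_zero]
  smul_mem' := by
    intro c α hα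
    show genAct ν (c * α) f = 0
    rw [genAct_mul hν, hα, genAct_zero_right]

/-- Structure coefficient of the contraction (apolarity) action: `X^a` sends `x^c`
to `x^(c-a)` if `a ≤ c` and to `0` otherwise. -/
noncomputable def cnu (c a : σ →₀ ℕ) : K :=
  open scoped Classical in if a ≤ c then 1 else 0

theorem cnu_mul (c a b : σ →₀ ℕ) :
    (cnu c (a + b) : K) = cnu c b * cnu (c - b) a := by
  classical
  unfold cnu
  by_cases hb : b ≤ c
  · by_cases ha : a ≤ c - b
    · have h : a + b ≤ c := (le_tsub_iff_right hb).mp ha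
      simp [hb, ha, h]
    · have h : ¬ a + b ≤ c := fun h => ha ((le_tsub_iff_right hb).mpr h)
      simp [hb, ha, h]
  · have h : ¬ a + b ≤ c := fun h => hb (le_trans le_add_self h)
    simp [hb, h]

/-- The contraction action `α ∘ f`. -/
noncomputable def cAct (α f : MvPolynomial σ K) : MvPolynomial σ K :=
  genAct cnu α f

/-- The annihilator `Ann(f)` of `f` under the contraction action, as an ideal. -/
noncomputable def cAnn (f : MvPolynomial σ K) : Ideal (MvPolynomial σ K) :=
  annG cnu cnu_mul f

theorem mem_cAnn {f α : MvPolynomial σ K} : α ∈ cAnn f ↔ cAct α f = 0 := Iff.rfl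

/-- The `K`-submodule of polynomials all of whose monomials satisfy `P`. -/
noncomputable def bihom (K : Type*) [CommSemiring K] {σ : Type*} (P : (σ →₀ ℕ) → Prop) :
    Submodule K (MvPolynomial σ K) where
  carrier := {p | ∀ c ∈ p.support, P c}
  zero_mem' := by
    intro c hc
    simp at hc
  add_mem' := by
    classical
    intro p q hp hq c hc
    rcases Finset.mem_union.mp (MvPolynomial.support_add hc) with h | h
    · exact hp c h
    · exact hq c h
  smul_mem' := by
    intro k p hp c hc
    exact hp c (MvPolynomial.support_smul hc)

/-- The x-degree of an exponent vector. -/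
def degX {n m : ℕ} (c : (Fin (n + 1) ⊕ Fin m) →₀ ℕ) : ℕ := ∑ r, c (Sum.inl r)

/-- The u-degree of an exponent vector. -/
def degU {n m : ℕ} (c : (Fin (n + 1) ⊕ Fin m) →₀ ℕ) : ℕ := ∑ k, c (Sum.inr k)

/-- The bihomogeneous component `T_(i,j)`. -/
noncomputable def Tbi (K : Type*) [CommSemiring K] {n m : ℕ} (i j : ℕ) :
    Submodule K (MvPolynomial (Fin (n + 1) ⊕ Fin m) K) :=
  bihom K fun c => degX c = i ∧ degU c = j

/-- The bigraded component `A_(i,j)` of `A = T ⧸ Ann(f)`: the image of `T_(i,j)`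
in the quotient. -/
noncomputable def Abi {K : Type*} [Field K] {n m : ℕ}
    (f : MvPolynomial (Fin (n + 1) ⊕ Fin m) K) (i j : ℕ) :
    Submodule K (MvPolynomial (Fin (n + 1) ⊕ Fin m) K ⧸ cAnn f) :=
  (Tbi K i j).map (Ideal.Quotient.mkₐ K (cAnn f)).toLinearMap

theorem genAct_smul_right (ν : (σ →₀ ℕ) → (σ →₀ ℕ) → K) (k : K) (α f : MvPolynomial σ K) :
    genAct ν α (k • f) = k • genAct ν α f := by
  unfold genAct
  rw [Finsupp.smul_sum]
  apply Finsupp.sum_congr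
  intro a _
  rw [AddMonoidAlgebra.coeff_smul, Finsupp.sum_smul_index (fun c => by simp only [mul_zero, map_zero]),
    Finsupp.smul_sum]
  apply Finsupp.sum_congr
  intro c _
  rw [smul_monomial, smul_eq_mul]
  congr 1
  ring

theorem genAct_smul_left (ν : (σ →₀ ℕ) → (σ →₀ ℕ) → K) (k : K) (α f : MvPolynomial σ K) :
    genAct ν (k • α) f = k • genAct ν α f := by
  unfold genAct
  rw [AddMonoidAlgebra.coeff_smul, Finsupp.sum_smul_index (fun a => by
      simp only [mul_zero, zero_mul, map_zero, Finsupp.sum_fun_zero]),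
    Finsupp.smul_sum]
  apply Finsupp.sum_congr
  intro a _
  rw [Finsupp.smul_sum]
  apply Finsupp.sum_congr
  intro c _
  rw [smul_monomial, smul_eq_mul]
  congr 1
  ring

theorem genAct_one {ν : (σ →₀ ℕ) → (σ →₀ ℕ) → K} (hν : ∀ c, ν c 0 = 1)
    (f : MvPolynomial σ K) : genAct ν 1 f = f := by
  have h1 : (1 : MvPolynomial σ K) = monomial 0 1 := by
    rw [monomial_zero', C_1]
  unfold genAct
  rw [h1, ← single_eq_monomial, AddMonoidAlgebra.coeff_single, Finsupp.sum_single_index (by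
    simp only [mul_zero, zero_mul, map_zero, Finsupp.sum_fun_zero])]
  calc
    (Finsupp.sum (AddMonoidAlgebra.coeff f) fun c cf => monomial (c - 0) (ν c 0 * (1 * cf)))
        = Finsupp.sum (AddMonoidAlgebra.coeff f) fun c cf => AddMonoidAlgebra.single c cf := by
          apply Finsupp.sum_congr
          intro c _
          rw [hν, tsub_zero, one_mul, one_mul, single_eq_monomial]
    _ = f := AddMonoidAlgebra.sum_coeff_single f
theorem descFactorial_add_eq (v a b : ℕ) :
    v.descFactorial (a + b) = v.descFactorial b * (v - b).descFactorial a := by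
  induction a with
  | zero => simp
  | succ a ih =>
    have h : a + 1 + b = (a + b) + 1 := by omega
    rw [h, Nat.descFactorial_succ, ih, Nat.descFactorial_succ, Nat.sub_sub]
    ring_nf

/-- Structure coefficient of the differentiation action: the operator monomial `X^a`
sends `x^c` to `(∏ᵢ (cᵢ)(cᵢ-1)⋯(cᵢ-aᵢ+1)) x^(c-a)`. -/
noncomputable def dnu {σ K : Type*} [CommSemiring K] [Fintype σ] (c a : σ →₀ ℕ) : K :=
  ((∏ i, (c i).descFactorial (a i) : ℕ) : K)

theorem dnu_mul {σ K : Type*} [CommSemiring K] [Fintype σ] (c a b : σ →₀ ℕ) :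
    (dnu c (a + b) : K) = dnu c b * dnu (c - b) a := by
  unfold dnu
  rw [← Nat.cast_mul, ← Finset.prod_mul_distrib]
  congr 1
  apply Finset.prod_congr rfl
  intro i _
  rw [Finsupp.add_apply, Finsupp.tsub_apply, descFactorial_add_eq]

/-- The differentiation action `α(f)`, where `X_i` acts as `∂/∂x_i`. -/
noncomputable def dAct {σ K : Type*} [CommSemiring K] [Fintype σ]
    (α f : MvPolynomial σ K) : MvPolynomial σ K :=
  genAct dnu α f

/-- The annihilator `Ann(f)` of `f` under the differentiation action, as an ideal. -/
noncomputable def dAnn {σ K : Type*} [CommSemiring K] [Fintype σ]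
    (f : MvPolynomial σ K) : Ideal (MvPolynomial σ K) :=
  annG dnu dnu_mul f

theorem mem_dAnn {σ K : Type*} [CommSemiring K] [Fintype σ] {f α : MvPolynomial σ K} :
    α ∈ dAnn f ↔ dAct α f = 0 := Iff.rfl

/-- The total-degree-`k` component `A_k` of `A = T ⧸ Ann(f)` (differentiation action):
the image in the quotient of the space of homogeneous operators of order `k`. -/
noncomputable def Adeg {K : Type*} [Field K] {n m : ℕ}
    (f : MvPolynomial (Fin (n + 1) ⊕ Fin m) K) (k : ℕ) :
    Submodule K (MvPolynomial (Fin (n + 1) ⊕ Fin m) K ⧸ dAnn f) :=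
  (bihom K fun c => degX c + degU c = k).map (Ideal.Quotient.mkₐ K (dAnn f)).toLinearMap
theorem dnu_zero {σ K : Type*} [CommSemiring K] [Fintype σ] (c : σ →₀ ℕ) :
    (dnu c 0 : K) = 1 := by
  simp [dnu]

set_option synthInstance.maxHeartbeats 1000000

set_option maxHeartbeats 2000000

section Idealization

variable {K : Type*} [Field K] [CharZero K] {m : ℕ}

/-- The `T'`-submodule `I` of `S' = K[u_1,…,u_m]` generated by all the partial
derivatives of the `g_r` (as a `K`-subspace, it is spanned by the `∂(g_r)`). -/
noncomputable def derivSpan (n : ℕ) (g : Fin (n + 1) → MvPolynomial (Fin m) K) :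
    Submodule K (MvPolynomial (Fin m) K) :=
  Submodule.span K
    {h | ∃ (δ : MvPolynomial (Fin m) K) (r : Fin (n + 1)), h = dAct δ (g r)}

theorem dAct_mem_derivSpan (n : ℕ) (g : Fin (n + 1) → MvPolynomial (Fin m) K)
    (δ : MvPolynomial (Fin m) K) {h : MvPolynomial (Fin m) K}
    (hh : h ∈ derivSpan n g) : dAct δ h ∈ derivSpan n g := by
  induction hh using Submodule.span_induction with
  | mem x hx =>
    rcases hx with ⟨γ, r, rfl⟩
    exact Submodule.subset_span ⟨δ * γ, r, (genAct_mul dnu_mul δ γ (g r)).symm⟩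
  | zero =>
    rw [show dAct δ (0 : MvPolynomial (Fin m) K) = 0 from genAct_zero_right _ _]
    exact zero_mem _
  | add x y hx hy ihx ihy =>
    rw [show dAct δ (x + y) = dAct δ x + dAct δ y from genAct_add_right _ _ _ _]
    exact add_mem ihx ihy
  | smul k x hx ih =>
    rw [show dAct δ (k • x) = k • dAct δ x from genAct_smul_right _ _ _ _]
    exact Submodule.smul_mem _ _ ih

/-- `Ann(I)`, the ideal of differential operators annihilating `I`. -/
noncomputable def annDerivSpan (n : ℕ) (g : Fin (n + 1) → MvPolynomial (Fin m) K) :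
    Ideal (MvPolynomial (Fin m) K) where
  carrier := {δ | ∀ h ∈ derivSpan n g, dAct δ h = 0}
  zero_mem' := fun h _ => genAct_zero_left _ _
  add_mem' := by
    intro a b ha hb h hh
    rw [show dAct (a + b) h = dAct a h + dAct b h from genAct_add_left _ _ _ _,
      ha h hh, hb h hh, add_zero]
  smul_mem' := by
    intro c δ hδ h hh
    show dAct (c * δ) h = 0
    rw [show dAct (c * δ) h = dAct c (dAct δ h) from genAct_mul dnu_mul _ _ _,
      hδ h hh, show dAct c (0 : MvPolynomial (Fin m) K) = 0 from genAct_zero_right _ _]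

/-- `A' = T' ⧸ Ann(I)`. -/
noncomputable abbrev Aprime (n : ℕ) (g : Fin (n + 1) → MvPolynomial (Fin m) K) :=
  MvPolynomial (Fin m) K ⧸ annDerivSpan n g

/-- `I` is a module over `T'` via the differentiation action. -/
noncomputable instance derivSpan.instSMul (n : ℕ)
    (g : Fin (n + 1) → MvPolynomial (Fin m) K) :
    SMul (MvPolynomial (Fin m) K) ↥(derivSpan n g) :=
  ⟨fun δ h => ⟨dAct δ h.1, dAct_mem_derivSpan n g δ h.2⟩⟩

noncomputable instance derivSpan.instModule (n : ℕ)
    (g : Fin (n + 1) → MvPolynomial (Fin m) K) :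
    Module (MvPolynomial (Fin m) K) ↥(derivSpan n g) where
  one_smul h := Subtype.ext (genAct_one dnu_zero h.1)
  mul_smul δ γ h := Subtype.ext (genAct_mul dnu_mul δ γ h.1)
  smul_zero δ := Subtype.ext (genAct_zero_right dnu δ)
  smul_add δ h h' := Subtype.ext (genAct_add_right dnu δ h.1 h'.1)
  add_smul δ γ h := Subtype.ext (genAct_add_left dnu δ γ h.1)
  zero_smul h := Subtype.ext (genAct_zero_left dnu h.1)

theorem derivSpan.isTorsionBySet (n : ℕ) (g : Fin (n + 1) → MvPolynomial (Fin m) K) :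
    Module.IsTorsionBySet (MvPolynomial (Fin m) K) ↥(derivSpan n g)
      (annDerivSpan n g) :=
  fun x a => Subtype.ext (show dAct a.1 x.1 = (0 : MvPolynomial (Fin m) K) from
    a.2 x.1 x.2)

/-- `I` is naturally an `A'`-module. -/
noncomputable instance derivSpan.instModuleQuot (n : ℕ)
    (g : Fin (n + 1) → MvPolynomial (Fin m) K) :
    Module (Aprime n g) ↥(derivSpan n g) :=
  (derivSpan.isTorsionBySet n g).module

theorem derivSpan.smul_k_assoc (n : ℕ) (g : Fin (n + 1) → MvPolynomial (Fin m) K)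
    (k : K) (δ : MvPolynomial (Fin m) K) (h : ↥(derivSpan n g)) :
    (k • δ) • h = k • (δ • h) :=
  Subtype.ext (genAct_smul_left dnu k δ h.1)

noncomputable instance derivSpan.instTower (n : ℕ)
    (g : Fin (n + 1) → MvPolynomial (Fin m) K) :
    IsScalarTower K (Aprime n g) ↥(derivSpan n g) := by
  constructor
  intro k a h
  obtain ⟨δ, rfl⟩ := Ideal.Quotient.mk_surjective a
  have h1 : k • (Ideal.Quotient.mk (annDerivSpan n g) δ) =
      Ideal.Quotient.mk (annDerivSpan n g) (k • δ) :=
    ((Ideal.Quotient.mkₐ K (annDerivSpan n g)).toLinearMap.map_smul k δ).symm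
  rw [h1]
  show (k • δ) • h = k • (δ • h)
  exact derivSpan.smul_k_assoc n g k δ h

noncomputable instance derivSpan.instModuleOp (n : ℕ)
    (g : Fin (n + 1) → MvPolynomial (Fin m) K) :
    Module (Aprime n g)ᵐᵒᵖ ↥(derivSpan n g) :=
  Module.compHom _ ((RingHom.id (Aprime n g)).fromOpposite mul_comm)

noncomputable instance derivSpan.instCentral (n : ℕ)
    (g : Fin (n + 1) → MvPolynomial (Fin m) K) :
    IsCentralScalar (Aprime n g) ↥(derivSpan n g) :=
  ⟨fun _ _ => rfl⟩

noncomputable instance derivSpan.instSMulComm (n : ℕ)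
    (g : Fin (n + 1) → MvPolynomial (Fin m) K) :
    SMulCommClass (Aprime n g) (Aprime n g)ᵐᵒᵖ ↥(derivSpan n g) := by
  constructor
  intro a b h
  show a • (b.unop • h) = b.unop • (a • h)
  rw [← mul_smul, ← mul_smul, mul_comm]

noncomputable instance derivSpan.instTowerOp (n : ℕ)
    (g : Fin (n + 1) → MvPolynomial (Fin m) K) :
    IsScalarTower K (Aprime n g)ᵐᵒᵖ ↥(derivSpan n g) := by
  constructor
  intro k a h
  show (k • a).unop • h = k • (a.unop • h)
  rw [MulOpposite.unop_smul, smul_assoc]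

end Idealization

theorem dAct_X {σ R : Type*} [CommSemiring R] [Fintype σ] (i : σ) (p : MvPolynomial σ R) :
    dAct (X i) p = pderiv i p := by
  classical
  induction p using MvPolynomial.induction_on' with
  | monomial c s =>
    have hdnu : (dnu c (Finsupp.single i 1) : R) = c i := by
      rw [dnu, Finset.prod_eq_single i
        (fun j _ hj => by rw [Finsupp.single_eq_of_ne hj, Nat.descFactorial_zero])
        (fun hi => absurd (Finset.mem_univ i) hi)]
      simp
    rw [dAct, X, genAct_monomial, pderiv_monomial, hdnu, one_mul, mul_comm]
  | add p q hp hq => rw [dAct, genAct_add_right, ← dAct, ← dAct, hp, hq, map_add]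

theorem dAct_add_left {σ R : Type*} [CommSemiring R] [Fintype σ] (α β p : MvPolynomial σ R) :
    dAct (α + β) p = dAct α p + dAct β p :=
  genAct_add_left dnu α β p

theorem dAct_mul {σ R : Type*} [CommSemiring R] [Fintype σ] (α β p : MvPolynomial σ R) :
    dAct (α * β) p = dAct α (dAct β p) :=
  genAct_mul dnu_mul α β p

theorem dAct_C {σ R : Type*} [CommSemiring R] [Fintype σ] (a : R) (p : MvPolynomial σ R) :
    dAct (C a) p = a • p := by
  rw [C_eq_smul_one, dAct, genAct_smul_left, genAct_one dnu_zero]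

theorem pderiv_inl_rename_inr {σ τ R : Type*} [CommSemiring R] (i : σ)
    (p : MvPolynomial τ R) : pderiv (Sum.inl i) (rename Sum.inr p) = 0 := by
  classical
  refine pderiv_eq_zero_of_notMem_vars fun hi => ?_
  obtain ⟨j, -, hj⟩ := Finset.mem_image.mp (vars_rename _ _ hi)
  exact Sum.inr_ne_inl hj

theorem TrivSqZeroExt.inr_mul_eq_inr_smul {R M : Type*} [CommSemiring R] [AddCommMonoid M]
    [Module R M] [Module Rᵐᵒᵖ M] [IsCentralScalar R M] (x : M) (z : TrivSqZeroExt R M) :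
    TrivSqZeroExt.inr x * z = TrivSqZeroExt.inr (z.fst • x) := by
  rw [← z.inl_fst_add_inr_snd_eq, mul_add, TrivSqZeroExt.inr_mul_inl, TrivSqZeroExt.inr_mul_inr,
    add_zero, op_smul_eq_smul, TrivSqZeroExt.fst_add, TrivSqZeroExt.fst_inl,
    TrivSqZeroExt.fst_inr, add_zero]

section LinearInX

variable {σ τ R : Type*} [CommSemiring R] [Fintype σ]

noncomputable def linearInX (p : σ → MvPolynomial τ R) (h : MvPolynomial τ R) :
    MvPolynomial (σ ⊕ τ) R :=
  ∑ s, X (Sum.inl s) * rename Sum.inr (p s) + rename Sum.inr h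

theorem linearInX_zero_left (h : MvPolynomial τ R) :
    linearInX (0 : σ → MvPolynomial τ R) h = rename Sum.inr h := by
  simp [linearInX]

theorem pderiv_inl_linearInX (r : σ) (p : σ → MvPolynomial τ R) (h : MvPolynomial τ R) :
    pderiv (Sum.inl r) (linearInX p h) = rename Sum.inr (p r) := by
  classical
  simp [linearInX, pderiv_inl_rename_inr, Pi.single_apply]

theorem pderiv_inr_linearInX (u : τ) (p : σ → MvPolynomial τ R) (h : MvPolynomial τ R) :
    pderiv (Sum.inr u) (linearInX p h) = linearInX (fun s => pderiv u (p s)) (pderiv u h) := by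
  simp [linearInX, pderiv_rename Sum.inr_injective]

theorem eq_zero_of_linearInX_eq_zero {p : σ → MvPolynomial τ R} {h : MvPolynomial τ R}
    (H : linearInX p h = 0) : p = 0 ∧ h = 0 := by
  have hinj := rename_injective (R := R) (Sum.inr : τ → σ ⊕ τ) Sum.inr_injective
  have hp : p = 0 := funext fun r => hinj <| by
    simpa [H] using (pderiv_inl_linearInX r p h).symm
  subst hp
  exact ⟨rfl, hinj (((linearInX_zero_left h).symm.trans H).trans (map_zero _).symm)⟩

end LinearInX

section DerivSpan

variable {K : Type*} [Field K] {m : ℕ} (n : ℕ) (g : Fin (n + 1) → MvPolynomial (Fin m) K)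

noncomputable def derivSpan.gen (r : Fin (n + 1)) : derivSpan n g :=
  ⟨g r, Submodule.subset_span ⟨1, r, (genAct_one dnu_zero (g r)).symm⟩⟩

theorem mem_annDerivSpan_iff (δ : MvPolynomial (Fin m) K) :
    δ ∈ annDerivSpan n g ↔ ∀ r, dAct δ (g r) = 0 := by
  refine ⟨fun h r => h (g r) (derivSpan.gen n g r).2, fun h v hv => ?_⟩
  simp only [dAct] at h ⊢
  induction hv using Submodule.span_induction with
  | mem w hw =>
    obtain ⟨γ, r, rfl⟩ := hw
    rw [dAct, ← genAct_mul dnu_mul, mul_comm, genAct_mul dnu_mul, h r, genAct_zero_right]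
  | zero => exact genAct_zero_right dnu δ
  | add x y _ _ hx hy => rw [genAct_add_right, hx, hy, add_zero]
  | smul k x _ hx => rw [genAct_smul_right, hx, smul_zero]

end DerivSpan

section ToIdealization

variable {K : Type*} [Field K] [CharZero K] {m : ℕ} (n : ℕ)
  (g : Fin (n + 1) → MvPolynomial (Fin m) K)

theorem derivSpan.coe_mk_smul (δ : MvPolynomial (Fin m) K) (x : derivSpan n g) :
    ((Ideal.Quotient.mk (annDerivSpan n g) δ • x : derivSpan n g) : MvPolynomial (Fin m) K) =
      dAct δ x :=
  rfl

noncomputable def toIdealization :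
    MvPolynomial (Fin (n + 1) ⊕ Fin m) K →ₐ[K] TrivSqZeroExt (Aprime n g) (derivSpan n g) :=
  aeval (Sum.elim (fun r => TrivSqZeroExt.inr (derivSpan.gen n g r))
    fun u => TrivSqZeroExt.inl (Ideal.Quotient.mk _ (X u)))

theorem toIdealization_X_inl (r : Fin (n + 1)) :
    toIdealization n g (X (Sum.inl r)) = TrivSqZeroExt.inr (derivSpan.gen n g r) :=
  aeval_X _ _

theorem toIdealization_X_inr (u : Fin m) :
    toIdealization n g (X (Sum.inr u)) = TrivSqZeroExt.inl (Ideal.Quotient.mk _ (X u)) :=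
  aeval_X _ _

theorem toIdealization_rename_inr (p : MvPolynomial (Fin m) K) :
    toIdealization n g (rename Sum.inr p) = TrivSqZeroExt.inl (Ideal.Quotient.mk _ p) := by
  have h : (toIdealization n g).comp (rename Sum.inr) =
      (TrivSqZeroExt.inlAlgHom K _ _).comp (Ideal.Quotient.mkₐ K (annDerivSpan n g)) := by
    refine MvPolynomial.algHom_ext fun u => ?_
    simp [toIdealization_X_inr]
  exact AlgHom.congr_fun h p

/-- `(a, h) ↦ a f + h`, where `a ∈ A'` acts on `f = ∑ xᵣ gᵣ` through the `gᵣ`. -/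
noncomputable def ofIdealization :
    TrivSqZeroExt (Aprime n g) (derivSpan n g) →ₗ[K] MvPolynomial (Fin (n + 1) ⊕ Fin m) K where
  toFun z := linearInX (fun r => (z.fst • derivSpan.gen n g r : derivSpan n g)) z.snd
  map_add' z w := by
    simp only [linearInX, TrivSqZeroExt.fst_add, TrivSqZeroExt.snd_add, add_smul,
      Submodule.coe_add, map_add, mul_add, Finset.sum_add_distrib]
    abel
  map_smul' k z := by
    simp [linearInX, smul_assoc, Finset.smul_sum]

theorem ofIdealization_apply (z : TrivSqZeroExt (Aprime n g) (derivSpan n g)) :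
    ofIdealization n g z =
      linearInX (fun r => (z.fst • derivSpan.gen n g r : derivSpan n g)) z.snd :=
  rfl

theorem ofIdealization_inr (x : derivSpan n g) :
    ofIdealization n g (TrivSqZeroExt.inr x) = rename Sum.inr (x : MvPolynomial (Fin m) K) := by
  have h : (fun r => (((TrivSqZeroExt.inr x : TrivSqZeroExt (Aprime n g) (derivSpan n g)).fst •
      derivSpan.gen n g r : derivSpan n g) : MvPolynomial (Fin m) K)) = 0 :=
    funext fun r => congrArg Subtype.val (zero_smul (Aprime n g) (derivSpan.gen n g r))
  rw [ofIdealization_apply, h, linearInX_zero_left]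
  rfl

theorem ofIdealization_toIdealization_X_mul (i : Fin (n + 1) ⊕ Fin m)
    (z : TrivSqZeroExt (Aprime n g) (derivSpan n g)) :
    ofIdealization n g (toIdealization n g (X i) * z) = dAct (X i) (ofIdealization n g z) := by
  rw [dAct_X]
  cases i with
  | inl r =>
    rw [toIdealization_X_inl, TrivSqZeroExt.inr_mul_eq_inr_smul, ofIdealization_inr, ofIdealization_apply,
      pderiv_inl_linearInX]
  | inr u =>
    rw [toIdealization_X_inr, TrivSqZeroExt.inl_mul_eq_smul]
    simp only [ofIdealization_apply, TrivSqZeroExt.fst_smul,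
      TrivSqZeroExt.snd_smul, smul_eq_mul, mul_smul, derivSpan.coe_mk_smul, dAct_X,
      pderiv_inr_linearInX]

theorem ofIdealization_toIdealization_mul (δ : MvPolynomial (Fin (n + 1) ⊕ Fin m) K)
    (z : TrivSqZeroExt (Aprime n g) (derivSpan n g)) :
    ofIdealization n g (toIdealization n g δ * z) = dAct δ (ofIdealization n g z) := by
  induction δ using MvPolynomial.induction_on generalizing z with
  | C a =>
    rw [← algebraMap_eq, AlgHom.commutes, ← Algebra.smul_def, map_smul, algebraMap_eq, dAct_C]
  | add p q hp hq => rw [map_add, add_mul, map_add, hp, hq, dAct_add_left]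
  | mul_X p i hp =>
    rw [_root_.map_mul (toIdealization n g), mul_assoc, hp, ofIdealization_toIdealization_X_mul,
      dAct_mul]

theorem ofIdealization_one (f : MvPolynomial (Fin (n + 1) ⊕ Fin m) K)
    (hf : f = ∑ r, X (Sum.inl r) * rename Sum.inr (g r)) : ofIdealization n g 1 = f := by
  simp [ofIdealization, linearInX, hf, derivSpan.gen]

theorem ofIdealization_injective : Function.Injective (ofIdealization n g) := by
  refine (injective_iff_map_eq_zero _).mpr fun z hz => ?_
  obtain ⟨hfst, hsnd⟩ := eq_zero_of_linearInX_eq_zero hz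
  obtain ⟨δ, hδ⟩ := Ideal.Quotient.mk_surjective z.fst
  have hann : δ ∈ annDerivSpan n g := (mem_annDerivSpan_iff n g δ).mpr fun r => by
    have h := congrFun hfst r
    rwa [← hδ, derivSpan.coe_mk_smul] at h
  refine TrivSqZeroExt.ext ?_ (Subtype.ext hsnd)
  rw [TrivSqZeroExt.fst_zero, ← hδ, Ideal.Quotient.eq_zero_iff_mem]
  exact hann

theorem dAnn_eq_ker_toIdealization (f : MvPolynomial (Fin (n + 1) ⊕ Fin m) K)
    (hf : f = ∑ r, X (Sum.inl r) * rename Sum.inr (g r)) :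
    dAnn f = RingHom.ker (toIdealization n g) := by
  ext δ
  rw [mem_dAnn, RingHom.mem_ker, ← (ofIdealization_injective n g).eq_iff, map_zero,
    ← mul_one (toIdealization n g δ), ofIdealization_toIdealization_mul,
    ofIdealization_one n g f hf]

theorem inr_mem_range_toIdealization (x : derivSpan n g) :
    TrivSqZeroExt.inr x ∈ (toIdealization n g).range := by
  obtain ⟨x, hx⟩ := x
  induction hx using Submodule.span_induction with
  | mem x hx =>
    obtain ⟨γ, r, rfl⟩ := hx
    refine (AlgHom.mem_range _).mpr ⟨X (Sum.inl r) * rename Sum.inr γ, ?_⟩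
    rw [map_mul, toIdealization_X_inl, toIdealization_rename_inr,
      TrivSqZeroExt.inr_mul_eq_inr_smul]
    rfl
  | zero =>
    convert zero_mem (toIdealization n g).range
    exact TrivSqZeroExt.inr_zero _
  | add x y hx hy hx_mem hy_mem =>
    rw [show (⟨x + y, add_mem hx hy⟩ : derivSpan n g) = ⟨x, hx⟩ + ⟨y, hy⟩ from rfl,
      TrivSqZeroExt.inr_add]
    exact add_mem hx_mem hy_mem
  | smul k x hx hx_mem =>
    rw [show (⟨k • x, Submodule.smul_mem _ k hx⟩ : derivSpan n g) = k • ⟨x, hx⟩ from rfl,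
      TrivSqZeroExt.inr_smul]
    exact Subalgebra.smul_mem _ hx_mem k

theorem toIdealization_surjective : Function.Surjective (toIdealization n g) := by
  intro z
  obtain ⟨p, hp⟩ := Ideal.Quotient.mk_surjective z.fst
  rw [← z.inl_fst_add_inr_snd_eq, ← hp, ← toIdealization_rename_inr]
  exact add_mem (AlgHom.mem_range_self _ _) (inr_mem_range_toIdealization n g z.snd)

end ToIdealization

section Idealization

variable {K : Type*} [Field K] [CharZero K] {m : ℕ}

theorem stmt_12_general (n : ℕ) (g : Fin (n + 1) → MvPolynomial (Fin m) K)
    (f : MvPolynomial (Fin (n + 1) ⊕ Fin m) K)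
    (hf : f = ∑ r, MvPolynomial.X (Sum.inl r) *
      MvPolynomial.rename Sum.inr (g r)) :
    Nonempty ((MvPolynomial (Fin (n + 1) ⊕ Fin m) K ⧸ dAnn f) ≃ₐ[K]
      TrivSqZeroExt (Aprime n g) ↥(derivSpan n g)) :=
  ⟨(Ideal.quotientEquivAlgOfEq K (dAnn_eq_ker_toIdealization n g f hf)).trans
    (Ideal.quotientKerAlgEquivOfSurjective (toIdealization_surjective n g))⟩

theorem stmt_12 (n d : ℕ) (g : Fin (n + 1) → MvPolynomial (Fin m) K)
    (hg : ∀ r, (g r).IsHomogeneous d)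
    (f : MvPolynomial (Fin (n + 1) ⊕ Fin m) K)
    (hf : f = ∑ r, MvPolynomial.X (Sum.inl r) *
      MvPolynomial.rename Sum.inr (g r)) :
    Nonempty ((MvPolynomial (Fin (n + 1) ⊕ Fin m) K ⧸ dAnn f) ≃ₐ[K]
      TrivSqZeroExt (Aprime n g) ↥(derivSpan n g)) :=
  stmt_12_general n g f hf

end Idealization

end CW
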